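/- Let K₁ ∈ B(H₁) and K₂ ∈ B(H₂). If F₁ ⊕ F₂ : Ω → H₁ ⊕ H₂ is a continuous (K₁ ⊕ K₂)-frame with bounds 0 < A ≤ B, then F₁ is a continuous K₁-frame for H₁ with bounds A, B and F₂ is a continuous K₂-frame for H₂ with bounds A, B. -/

import Mathlib

/-!
The frame inequalities for `F₁ ⊕ F₂`, tested on the vectors `(u, 0)` and `(0, v)`, are exactly
those of `F₁` and `F₂`: these embeddings preserve norms and inner products with `(F₁ ω, F₂ ω)`,
and `(K₁ ⊕ K₂)* = K₁* ⊕ K₂*`.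
-/

open MeasureTheory ContinuousLinearMap

/-- The direct sum operator `K₁ ⊕ K₂` on the super Hilbert space `H₁ ⊕ H₂`, mapping
`(u, v)` to `(K₁ u, K₂ v)`. -/
noncomputable def prodOp {𝕜 : Type*} [RCLike 𝕜]
    {H₁ : Type*} [NormedAddCommGroup H₁] [InnerProductSpace 𝕜 H₁]
    {H₂ : Type*} [NormedAddCommGroup H₂] [InnerProductSpace 𝕜 H₂]
    (K₁ : H₁ →L[𝕜] H₁) (K₂ : H₂ →L[𝕜] H₂) :
    WithLp 2 (H₁ × H₂) →L[𝕜] WithLp 2 (H₁ × H₂) :=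
  ((WithLp.prodContinuousLinearEquiv 2 𝕜 H₁ H₂).symm.toContinuousLinearMap).comp
    ((K₁.prodMap K₂).comp (WithLp.prodContinuousLinearEquiv 2 𝕜 H₁ H₂).toContinuousLinearMap)

section

variable {𝕜 : Type*} [RCLike 𝕜] [MeasurableSpace 𝕜]
  {H H' : Type*} [NormedAddCommGroup H] [InnerProductSpace 𝕜 H] [CompleteSpace H]
  [NormedAddCommGroup H'] [InnerProductSpace 𝕜 H'] [CompleteSpace H']
  {Ω : Type*} [MeasurableSpace Ω]

/-- The positivity of the bounds, `0 < A ≤ B`, is not part of this predicate. -/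
def IsContinuousKFrame (μ : Measure Ω) (K : H →L[𝕜] H) (F : Ω → H) (A B : ℝ) : Prop :=
  ∀ u : H, Measurable (fun ω => (inner 𝕜 (F ω) u : 𝕜)) ∧
    A * ‖adjoint K u‖ ^ 2 ≤ ∫ ω, ‖(inner 𝕜 (F ω) u : 𝕜)‖ ^ 2 ∂μ ∧
    ∫ ω, ‖(inner 𝕜 (F ω) u : 𝕜)‖ ^ 2 ∂μ ≤ B * ‖u‖ ^ 2

theorem IsContinuousKFrame.of_norm_preserving {μ : Measure Ω} {K : H →L[𝕜] H}
    {K' : H' →L[𝕜] H'} {F : Ω → H} {F' : Ω → H'} {A B : ℝ} (J : H' → H)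
    (hJ : ∀ u, ‖J u‖ = ‖u‖) (hF : ∀ ω u, inner 𝕜 (F ω) (J u) = (inner 𝕜 (F' ω) u : 𝕜))
    (hK : ∀ u, ‖adjoint K (J u)‖ = ‖adjoint K' u‖) (h : IsContinuousKFrame μ K F A B) :
    IsContinuousKFrame μ K' F' A B := by
  intro u
  obtain ⟨hmeas, hlower, hupper⟩ := h (J u)
  simp only [hF, hK, hJ] at hmeas hlower hupper
  exact ⟨hmeas, hlower, hupper⟩

end

section ProdOp

variable {𝕜 : Type*} [RCLike 𝕜]
  {H₁ H₂ : Type*} [NormedAddCommGroup H₁] [InnerProductSpace 𝕜 H₁]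
  [NormedAddCommGroup H₂] [InnerProductSpace 𝕜 H₂]

@[simp]
theorem prodOp_toLp (K₁ : H₁ →L[𝕜] H₁) (K₂ : H₂ →L[𝕜] H₂) (u : H₁) (v : H₂) :
    prodOp K₁ K₂ (WithLp.toLp 2 (u, v)) = WithLp.toLp 2 (K₁ u, K₂ v) :=
  rfl

theorem adjoint_prodOp [CompleteSpace H₁] [CompleteSpace H₂]
    (K₁ : H₁ →L[𝕜] H₁) (K₂ : H₂ →L[𝕜] H₂) :
    adjoint (prodOp K₁ K₂) = prodOp (adjoint K₁) (adjoint K₂) := by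
  refine ((eq_adjoint_iff _ _).2 fun x y => ?_).symm
  simp [WithLp.prod_inner_apply, prodOp, adjoint_inner_left]

end ProdOp

theorem prod_K_frame_components
    {𝕜 : Type*} [RCLike 𝕜] [MeasurableSpace 𝕜]
    {H₁ : Type*} [NormedAddCommGroup H₁] [InnerProductSpace 𝕜 H₁] [CompleteSpace H₁]
    {H₂ : Type*} [NormedAddCommGroup H₂] [InnerProductSpace 𝕜 H₂] [CompleteSpace H₂]
    {Ω : Type*} [MeasurableSpace Ω] {μ : Measure Ω}
    (K₁ : H₁ →L[𝕜] H₁) (K₂ : H₂ →L[𝕜] H₂)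
    (F₁ : Ω → H₁) (F₂ : Ω → H₂) (A B : ℝ)
    (hmeas : ∀ x : WithLp 2 (H₁ × H₂), Measurable
      fun ω => (inner 𝕜 ((WithLp.equiv 2 (H₁ × H₂)).symm (F₁ ω, F₂ ω)) x : 𝕜))
    (hframe : ∀ x : WithLp 2 (H₁ × H₂),
      A * ‖ContinuousLinearMap.adjoint (prodOp K₁ K₂) x‖ ^ 2 ≤
        ∫ ω, ‖(inner 𝕜 ((WithLp.equiv 2 (H₁ × H₂)).symm (F₁ ω, F₂ ω)) x : 𝕜)‖ ^ 2 ∂μ ∧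
      ∫ ω, ‖(inner 𝕜 ((WithLp.equiv 2 (H₁ × H₂)).symm (F₁ ω, F₂ ω)) x : 𝕜)‖ ^ 2 ∂μ ≤
        B * ‖x‖ ^ 2) :
    (∀ u : H₁, Measurable (fun ω => (inner 𝕜 (F₁ ω) u : 𝕜)) ∧
      A * ‖ContinuousLinearMap.adjoint K₁ u‖ ^ 2 ≤
        ∫ ω, ‖(inner 𝕜 (F₁ ω) u : 𝕜)‖ ^ 2 ∂μ ∧
      ∫ ω, ‖(inner 𝕜 (F₁ ω) u : 𝕜)‖ ^ 2 ∂μ ≤ B * ‖u‖ ^ 2) ∧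
    (∀ v : H₂, Measurable (fun ω => (inner 𝕜 (F₂ ω) v : 𝕜)) ∧
      A * ‖ContinuousLinearMap.adjoint K₂ v‖ ^ 2 ≤
        ∫ ω, ‖(inner 𝕜 (F₂ ω) v : 𝕜)‖ ^ 2 ∂μ ∧
      ∫ ω, ‖(inner 𝕜 (F₂ ω) v : 𝕜)‖ ^ 2 ∂μ ≤ B * ‖v‖ ^ 2) := by
  have hprod : IsContinuousKFrame μ (prodOp K₁ K₂)
      (fun ω => (WithLp.equiv 2 (H₁ × H₂)).symm (F₁ ω, F₂ ω)) A B :=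
    fun x => ⟨hmeas x, hframe x⟩
  constructor
  · refine hprod.of_norm_preserving (fun u => WithLp.toLp 2 (u, 0))
      (WithLp.norm_toLp_fst 2 H₁ H₂) (fun ω u => by simp [WithLp.prod_inner_apply]) fun u => ?_
    simp [adjoint_prodOp]
  · refine hprod.of_norm_preserving (fun v => WithLp.toLp 2 (0, v))
      (WithLp.norm_toLp_snd 2 H₁ H₂) (fun ω v => by simp [WithLp.prod_inner_apply]) fun v => ?_
    simp [adjoint_prodOp]
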